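/- Fix an integer s ≥ 1. Let M be the free R-module on generators x0, x1_1, …, x1_s, y1_1, …, y1_s, x2, y2, and let d : M → M be the R-linear map with d(x0) = U²·y1_1; d(x1_j) = U⁴·y1_j + U²·y1_{j+1} for 1 ≤ j ≤ s−1; d(x1_s) = U⁴·y1_s; d(x2) = x1_s + U²·y2; d(y2) = U²·y1_s; and d(y1_j) = 0 for all j. Then d ∘ d = 0, the element z = U^{2(s−1)}·x0 + Σ_{j=1}^{s−1} U^{2(s−1−j)}·x1_j + y2 is a cycle, and the quotient of the homology H = ker d / im d by its U-torsion submodule is a free R-module of rank 1, generated by the image of the class of z. -/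
import Mathlib


noncomputable section

/-- `R = 𝔽₂[U]`, the polynomial ring in one variable over the field with two elements. -/
abbrev R : Type := Polynomial (ZMod 2)

/-- The variable `U` of `R = 𝔽₂[U]`. -/
def U : R := Polynomial.X

/-- The free `R`-module on the generators `x0, x2, y2` (indexed by `Fin 3`),
`x1_1, …, x1_s` (the first `Fin s` factor) and `y1_1, …, y1_s` (the second `Fin s`
factor). -/
abbrev M (s : ℕ) : Type := (Fin 3 ⊕ Fin s ⊕ Fin s) → R

def x0 (s : ℕ) : M s := Pi.single (Sum.inl 0) 1
def x2 (s : ℕ) : M s := Pi.single (Sum.inl 1) 1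
def y2 (s : ℕ) : M s := Pi.single (Sum.inl 2) 1
/-- `x1 s j` is the generator `x1_{j+1}` (so `j : Fin s` is the 0-based index). -/
def x1 (s : ℕ) (j : Fin s) : M s := Pi.single (Sum.inr (Sum.inl j)) 1
/-- `y1 s j` is the generator `y1_{j+1}` (so `j : Fin s` is the 0-based index). -/
def y1 (s : ℕ) (j : Fin s) : M s := Pi.single (Sum.inr (Sum.inr j)) 1

section dev
variable (s : ℕ) (hs : 1 ≤ s) (d : M s →ₗ[R] M s)

-- char two facts
lemma hUne : (U : R) ≠ 0 := by unfold U; exact Polynomial.X_ne_zero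
lemma h2R : (2 : R) = 0 := by
  have := CharP.cast_eq_zero R 2
  exact_mod_cast this
lemma haddR : ∀ a : R, a + a = 0 := fun a => CharTwo.add_self_eq_zero a
lemma haddM : ∀ a : M s, a + a = 0 := fun a => funext fun i => CharTwo.add_self_eq_zero _

lemma hsingle (i : Fin 3 ⊕ Fin s ⊕ Fin s) (c : R) :
    (Pi.single i c : M s) = c • (Pi.single i 1 : M s) := by
  funext i'
  by_cases h : i' = i <;> simp [Pi.single_apply, h]

lemma hrepr (m : M s) : m =
    m (Sum.inl 0) • x0 s + m (Sum.inl 1) • x2 s + m (Sum.inl 2) • y2 s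
      + (∑ j : Fin s, m (Sum.inr (Sum.inl j)) • x1 s j)
      + (∑ j : Fin s, m (Sum.inr (Sum.inr j)) • y1 s j) := by
  funext i
  rcases i with t | i
  · fin_cases t <;>
      simp [x0, x2, y2, x1, y1, Pi.single_apply, Finset.sum_apply, Fin.ext_iff]
  · rcases i with j | j <;>
      simp [x0, x2, y2, x1, y1, Pi.single_apply, Finset.sum_apply,
        Finset.sum_ite_eq]


variable (hx0 : d (x0 s) = (U ^ 2) • y1 s ⟨0, hs⟩)
    (hx1 : ∀ j : Fin s, ∀ h : (j : ℕ) + 1 < s,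
      d (x1 s j) = (U ^ 4) • y1 s j + (U ^ 2) • y1 s ⟨(j : ℕ) + 1, h⟩)
    (hx1s : d (x1 s ⟨s - 1, Nat.sub_lt hs Nat.one_pos⟩)
      = (U ^ 4) • y1 s ⟨s - 1, Nat.sub_lt hs Nat.one_pos⟩)
    (hx2 : d (x2 s) = x1 s ⟨s - 1, Nat.sub_lt hs Nat.one_pos⟩ + (U ^ 2) • y2 s)
    (hy2 : d (y2 s) = (U ^ 2) • y1 s ⟨s - 1, Nat.sub_lt hs Nat.one_pos⟩)
    (hy1 : ∀ j : Fin s, d (y1 s j) = 0)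

include hs hx0 hx1 hx1s hx2 hy2 hy1

lemma hdx1 : ∀ j : Fin s, d (x1 s j) = (U^4) • y1 s j +
    (if h : (j:ℕ)+1 < s then (U^2) • y1 s ⟨(j:ℕ)+1, h⟩ else 0) := by
  intro j
  by_cases h : (j:ℕ)+1 < s
  · rw [dif_pos h]; exact hx1 j h
  · rw [dif_neg h, add_zero]
    have hjlt := j.isLt
    have hj : j = ⟨s-1, Nat.sub_lt hs Nat.one_pos⟩ := Fin.ext (by simp only [Fin.val_mk]; omega)
    rw [hj]; exact hx1s

lemma hdm (m : M s) : d m =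
    m (Sum.inl 0) • d (x0 s) + m (Sum.inl 1) • d (x2 s) + m (Sum.inl 2) • d (y2 s)
      + ∑ j : Fin s, m (Sum.inr (Sum.inl j)) • d (x1 s j) := by
  conv_lhs => rw [hrepr s m]
  simp [map_add, map_smul, map_sum, hy1]

lemma hdd : d ∘ₗ d = 0 := by
  have h1 : d (d (x0 s)) = 0 := by rw [hx0, map_smul, hy1, smul_zero]
  have h2 : d (d (y2 s)) = 0 := by rw [hy2, map_smul, hy1, smul_zero]
  have h3 : d (d (x2 s)) = 0 := by
    rw [hx2, map_add, map_smul, hx1s, hy2, smul_smul, ← pow_add]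
    norm_num
    exact haddM s _
  have h4 : ∀ j, d (d (x1 s j)) = 0 := by
    intro j
    rw [hdx1 s hs d hx0 hx1 hx1s hx2 hy2 hy1 j]
    split_ifs <;> simp [map_add, map_smul, hy1]
  rw [LinearMap.ext_iff]
  intro m
  simp only [LinearMap.comp_apply, LinearMap.zero_apply]
  rw [hdm s hs d hx0 hx1 hx1s hx2 hy2 hy1 m]
  simp [map_add, map_smul, map_sum, h1, h2, h3, h4]

lemma hstep (k : ℕ) (hk : k < s) :
    (∑ j : Fin s, if (j:ℕ) < k+1 then (U^(2*(k-(j:ℕ)))) • x1 s j else 0)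
      = (U^2) • (∑ j : Fin s, if (j:ℕ) < k then (U^(2*(k-1-(j:ℕ)))) • x1 s j else 0)
        + x1 s ⟨k, hk⟩ := by
  rw [Finset.smul_sum]
  have hx : x1 s ⟨k, hk⟩ = ∑ j : Fin s, (if j = (⟨k, hk⟩ : Fin s) then x1 s j else 0) := by
    rw [Finset.sum_ite_eq']; simp
  rw [hx, ← Finset.sum_add_distrib]
  apply Finset.sum_congr rfl
  intro j _
  rcases lt_trichotomy (j:ℕ) k with h | h | h
  · rw [if_pos (by omega), if_pos h, if_neg (by simp [Fin.ext_iff]; omega), add_zero,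
      smul_smul, ← pow_add]
    congr 2
    omega
  · rw [if_pos (by omega), if_neg (by omega), smul_zero, zero_add,
      if_pos (Fin.ext (by simp [h])), show k - (j:ℕ) = 0 by omega]
    simp
  · rw [if_neg (by omega), if_neg (by omega), if_neg (by simp [Fin.ext_iff]; omega)]
    simp

lemma hcyc : ∀ k : ℕ, ∀ hk : k < s,
    d ((U^(2*k)) • x0 s + ∑ j : Fin s, if (j:ℕ) < k then (U^(2*(k-1-(j:ℕ)))) • x1 s j else 0)
      = (U^2) • y1 s ⟨k, hk⟩ := by
  intro k
  induction k with
  | zero =>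
    intro hk
    have : (∑ j : Fin s, if (j:ℕ) < 0 then (U^(2*(0-1-(j:ℕ)))) • x1 s j else 0) = 0 := by
      apply Finset.sum_eq_zero; intro j _; rw [if_neg (by omega)]
    rw [this, add_zero, mul_zero, pow_zero, one_smul, hx0]
  | succ k ih =>
    intro hk
    have hks : k < s := by omega
    have hrw : (U^(2*(k+1))) • x0 s
        + (∑ j : Fin s, if (j:ℕ) < k+1 then (U^(2*(k+1-1-(j:ℕ)))) • x1 s j else 0)
        = (U^2) • ((U^(2*k)) • x0 s
            + ∑ j : Fin s, if (j:ℕ) < k then (U^(2*(k-1-(j:ℕ)))) • x1 s j else 0)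
          + x1 s ⟨k, hks⟩ := by
      rw [smul_add, smul_smul, ← pow_add]
      have e1 : 2 + 2*k = 2*(k+1) := by omega
      rw [e1]
      have e2 : (∑ j : Fin s, if (j:ℕ) < k+1 then (U^(2*(k+1-1-(j:ℕ)))) • x1 s j else 0)
          = (∑ j : Fin s, if (j:ℕ) < k+1 then (U^(2*(k-(j:ℕ)))) • x1 s j else 0) := by
        apply Finset.sum_congr rfl; intro j _; congr 2 <;> omega
      rw [e2, hstep s hs d hx0 hx1 hx1s hx2 hy2 hy1 k hks]
      abel
    rw [hrw, map_add, map_smul, ih hks, hx1 ⟨k, hks⟩ (by simpa using hk)]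
    rw [smul_smul, ← pow_add]
    norm_num
    have : (U^4) • y1 s ⟨k, hks⟩ + ((U^4) • y1 s ⟨k, hks⟩ + (U^2) • y1 s ⟨k+1, hk⟩)
        = ((U^4) • y1 s ⟨k, hks⟩ + (U^4) • y1 s ⟨k, hks⟩) + (U^2) • y1 s ⟨k+1, hk⟩ := by abel
    rw [this, haddM, zero_add]

lemma hzker :
    ((U ^ (2 * (s - 1))) • x0 s
        + (∑ j : Fin s,
            if (j : ℕ) + 1 < s then (U ^ (2 * (s - 2 - (j : ℕ)))) • x1 s j else 0)
        + y2 s) ∈ LinearMap.ker d := by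
  rw [LinearMap.mem_ker, map_add]
  have e2 : (∑ j : Fin s, if (j:ℕ) + 1 < s then (U^(2*(s-2-(j:ℕ)))) • x1 s j else 0)
      = (∑ j : Fin s, if (j:ℕ) < s-1 then (U^(2*(s-1-1-(j:ℕ)))) • x1 s j else 0) := by
    apply Finset.sum_congr rfl; intro j _
    rcases lt_or_ge ((j:ℕ)+1) s with h | h
    · rw [if_pos h, if_pos (by omega)]; congr 2 <;> omega
    · rw [if_neg (by omega), if_neg (by omega)]
  rw [e2, hcyc s hs d hx0 hx1 hx1s hx2 hy2 hy1 (s-1) (Nat.sub_lt hs Nat.one_pos), hy2]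
  exact haddM s _
lemma hE1 (m : M s) (hm : d m = 0) : m (Sum.inl 1) = 0 := by
  have heq := hdm s hs d hx0 hx1 hx1s hx2 hy2 hy1 m
  rw [hm, hx0, hx2, hy2] at heq
  simp only [hdx1 s hs d hx0 hx1 hx1s hx2 hy2 hy1] at heq
  have heq2 := congrFun heq (Sum.inr (Sum.inl (⟨s-1, Nat.sub_lt hs Nat.one_pos⟩ : Fin s)))
  simp [x0, x2, y2, x1, y1, Pi.single_apply, Finset.sum_apply, dite_apply, ite_apply,
    Pi.add_apply, Pi.smul_apply, smul_eq_mul, Pi.zero_apply] at heq2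
  exact heq2.symm

lemma hRelB (m : M s) (hm : d m = 0) :
    U^2 * m (Sum.inl 0) + (if 0 = s - 1 then U^2 * m (Sum.inl 2) else 0)
      + U^4 * m (Sum.inr (Sum.inl ⟨0, hs⟩)) = 0 := by
  have heq := hdm s hs d hx0 hx1 hx1s hx2 hy2 hy1 m
  rw [hm, hx0, hx2, hy2] at heq
  simp only [hdx1 s hs d hx0 hx1 hx1s hx2 hy2 hy1] at heq
  have heq2 := congrFun heq (Sum.inr (Sum.inr (⟨0, hs⟩ : Fin s)))
  simp [x0, x2, y2, x1, y1, Pi.single_apply, Finset.sum_apply, dite_apply, ite_apply,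
    Pi.add_apply, Pi.smul_apply, smul_eq_mul, Pi.zero_apply, Fin.ext_iff] at heq2
  have hsum : (∑ x : Fin s, if 0 = (x:ℕ) then m (Sum.inr (Sum.inl x)) * U^4 else 0)
      = m (Sum.inr (Sum.inl ⟨0, hs⟩)) * U^4 := by
    rw [Finset.sum_eq_single (⟨0, hs⟩ : Fin s)]
    · simp
    · intro b _ hb
      exact if_neg (fun hc => hb (Fin.ext hc.symm))
    · intro h; exact absurd (Finset.mem_univ _) h
  rw [hsum] at heq2
  by_cases h0 : 0 = s - 1
  · rw [if_pos h0] at heq2 ⊢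
    linear_combination -heq2
  · rw [if_neg h0] at heq2 ⊢
    linear_combination -heq2

lemma hRelA (m : M s) (hm : d m = 0) (t : ℕ) (ht : t + 1 < s) :
    U^2 * m (Sum.inr (Sum.inl ⟨t, by omega⟩)) + (if t + 1 = s - 1 then U^2 * m (Sum.inl 2) else 0)
      + U^4 * m (Sum.inr (Sum.inl ⟨t+1, ht⟩)) = 0 := by
  have heq := hdm s hs d hx0 hx1 hx1s hx2 hy2 hy1 m
  rw [hm, hx0, hx2, hy2] at heq
  simp only [hdx1 s hs d hx0 hx1 hx1s hx2 hy2 hy1] at heq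
  have heq2 := congrFun heq (Sum.inr (Sum.inr (⟨t+1, ht⟩ : Fin s)))
  simp [x0, x2, y2, x1, y1, Pi.single_apply, Finset.sum_apply, dite_apply, ite_apply,
    Pi.add_apply, Pi.smul_apply, smul_eq_mul, Pi.zero_apply, Fin.ext_iff] at heq2
  rw [Finset.sum_add_distrib] at heq2
  have hsum1 : (∑ x : Fin s, if t + 1 = (x:ℕ) then m (Sum.inr (Sum.inl x)) * U^4 else 0)
      = m (Sum.inr (Sum.inl ⟨t+1, ht⟩)) * U^4 := by
    rw [Finset.sum_eq_single (⟨t+1, ht⟩ : Fin s)]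
    · simp
    · intro b _ hb
      exact if_neg (fun hc => hb (Fin.ext hc.symm))
    · intro h; exact absurd (Finset.mem_univ _) h
  have hsum2 : (∑ x : Fin s, if (x:ℕ) + 1 < s then
        (if t = (x:ℕ) then m (Sum.inr (Sum.inl x)) * U^2 else 0) else 0)
      = m (Sum.inr (Sum.inl ⟨t, by omega⟩)) * U^2 := by
    rw [Finset.sum_eq_single (⟨t, by omega⟩ : Fin s)]
    · rw [if_pos (by simpa using ht), if_pos (by simp)]
    · intro b _ hb
      split_ifs with h1 h2
      · exact absurd (Fin.ext h2.symm) hb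
      · rfl
      · rfl
    · intro h; exact absurd (Finset.mem_univ _) h
  rw [hsum1, hsum2] at heq2
  by_cases h0 : t + 1 = s - 1
  · rw [if_pos h0] at heq2 ⊢
    linear_combination -heq2
  · rw [if_neg h0] at heq2 ⊢
    linear_combination -heq2
omit hx0 hx1 hx1s hx2 hy2 hy1 hs in
lemma hcancel (a b : R) (h : U^2 * a + U^2 * b = 0) : a = b := by
  have h2 : U^2 * a = U^2 * b :=
    (eq_neg_of_add_eq_zero_left h).trans (CharTwo.neg_eq _)
  exact mul_left_cancel₀ (pow_ne_zero 2 hUne) h2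

lemma hF (m : M s) (hm : d m = 0) :
    ∀ n : ℕ, ∀ t : ℕ, ∀ ht : t + 1 < s, s - 2 - t = n →
      m (Sum.inr (Sum.inl ⟨t, by omega⟩)) = U^(2*n) *
        (m (Sum.inl 2) + U^2 * m (Sum.inr (Sum.inl ⟨s-1, Nat.sub_lt hs Nat.one_pos⟩))) := by
  intro n
  induction n with
  | zero =>
    intro t ht h0
    have hA := hRelA s hs d hx0 hx1 hx1s hx2 hy2 hy1 m hm t ht
    rw [if_pos (by omega)] at hA
    have he : (⟨t+1, ht⟩ : Fin s) = ⟨s-1, Nat.sub_lt hs Nat.one_pos⟩ :=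
      Fin.ext (show t + 1 = s - 1 by omega)
    rw [he] at hA
    rw [pow_zero, one_mul]
    apply hcancel
    linear_combination hA
  | succ n ih =>
    intro t ht h0
    have ht1 : (t+1) + 1 < s := by omega
    have hA := hRelA s hs d hx0 hx1 hx1s hx2 hy2 hy1 m hm t ht
    rw [if_neg (by omega)] at hA
    have hih := ih (t+1) ht1 (by omega)
    rw [add_zero] at hA
    rw [show 2*(n+1) = 2 + 2*n from by omega, pow_add]
    apply hcancel
    linear_combination hA - U^4 * hih

lemma hF3 (m : M s) (hm : d m = 0) :
    m (Sum.inl 0) = U^(2*(s-1)) *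
      (m (Sum.inl 2) + U^2 * m (Sum.inr (Sum.inl ⟨s-1, Nat.sub_lt hs Nat.one_pos⟩))) := by
  have hB := hRelB s hs d hx0 hx1 hx1s hx2 hy2 hy1 m hm
  by_cases h1 : s = 1
  · rw [if_pos (by omega)] at hB
    have he : (⟨0, hs⟩ : Fin s) = ⟨s-1, Nat.sub_lt hs Nat.one_pos⟩ :=
      Fin.ext (show 0 = s - 1 by omega)
    rw [he] at hB
    rw [show 2*(s-1) = 0 by omega, pow_zero, one_mul]
    apply hcancel
    linear_combination hB
  · rw [if_neg (by omega), add_zero] at hB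
    have hF0 := hF s hs d hx0 hx1 hx1s hx2 hy2 hy1 m hm (s-2) 0 (by omega) (by omega)
    have he : 2*(s-1) = 2 + 2*(s-2) := by omega
    rw [he, pow_add]
    apply hcancel
    linear_combination hB - U^4 * hF0
omit hs hx0 hx1 hx1s hx2 hy2 hy1 in
lemma hzsum_inl (t : Fin 3) :
    (∑ j : Fin s, if (j:ℕ)+1 < s then (U ^ (2 * (s - 2 - (j:ℕ)))) • x1 s j else 0)
      (Sum.inl t) = 0 := by
  rw [Finset.sum_apply]
  apply Finset.sum_eq_zero
  intro j _
  rw [ite_apply]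
  simp [x1, Pi.single_apply]

omit hs hx0 hx1 hx1s hx2 hy2 hy1 in
lemma hzsum_b (k : Fin s) :
    (∑ j : Fin s, if (j:ℕ)+1 < s then (U ^ (2 * (s - 2 - (j:ℕ)))) • x1 s j else 0)
      (Sum.inr (Sum.inr k)) = 0 := by
  rw [Finset.sum_apply]
  apply Finset.sum_eq_zero
  intro j _
  rw [ite_apply]
  simp [x1, Pi.single_apply]

omit hs hx0 hx1 hx1s hx2 hy2 hy1 in
lemma hzsum_a (k : Fin s) :
    (∑ j : Fin s, if (j:ℕ)+1 < s then (U ^ (2 * (s - 2 - (j:ℕ)))) • x1 s j else 0)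
      (Sum.inr (Sum.inl k)) = if (k:ℕ)+1 < s then U ^ (2 * (s - 2 - (k:ℕ))) else 0 := by
  rw [Finset.sum_apply]
  rw [Finset.sum_eq_single k]
  · rw [ite_apply]
    simp [x1, Pi.single_apply]
  · intro b _ hb
    rw [ite_apply]
    split_ifs with h1
    · simp [x1, Pi.single_apply, Ne.symm hb]
    · rfl
  · intro h; exact absurd (Finset.mem_univ _) h
lemma hbmem : ∀ k : ℕ, ∀ hk : k < s, ((U^2 : R) • y1 s ⟨k, hk⟩) ∈ LinearMap.range d := by
  intro k
  induction k with
  | zero => intro hk; exact ⟨x0 s, hx0⟩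
  | succ k ih =>
    intro hk
    have hks : k < s := by omega
    have hd := hx1 ⟨k, hks⟩ (by simpa using hk)
    have : (U^2 : R) • y1 s ⟨k+1, hk⟩
        = d (x1 s ⟨k, hks⟩) - (U^2 : R) • ((U^2 : R) • y1 s ⟨k, hks⟩) := by
      rw [hd, smul_smul, ← pow_add]
      norm_num
    rw [this]
    exact sub_mem (LinearMap.mem_range_self d _) (Submodule.smul_mem _ _ (ih hks))

lemma hdinl0 (n : M s) : d n (Sum.inl 0) = 0 := by
  rw [hdm s hs d hx0 hx1 hx1s hx2 hy2 hy1 n, hx0, hx2, hy2]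
  simp only [hdx1 s hs d hx0 hx1 hx1s hx2 hy2 hy1]
  simp [x0, x2, y2, x1, y1, Pi.single_apply, Finset.sum_apply, dite_apply, ite_apply,
    Pi.add_apply, Pi.smul_apply, smul_eq_mul, Pi.zero_apply]

omit hs hx0 hx1 hx1s hx2 hy2 hy1 in
lemma hgsum_inl (g : Fin s → R) (t : Fin 3) :
    (∑ j : Fin s, g j • ((U^2 : R) • y1 s j)) (Sum.inl t) = 0 := by
  rw [Finset.sum_apply]
  apply Finset.sum_eq_zero
  intro j _
  simp [y1, Pi.single_apply]

omit hs hx0 hx1 hx1s hx2 hy2 hy1 in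
lemma hgsum_a (g : Fin s → R) (k : Fin s) :
    (∑ j : Fin s, g j • ((U^2 : R) • y1 s j)) (Sum.inr (Sum.inl k)) = 0 := by
  rw [Finset.sum_apply]
  apply Finset.sum_eq_zero
  intro j _
  simp [y1, Pi.single_apply]

omit hs hx0 hx1 hx1s hx2 hy2 hy1 in
lemma hgsum_b (g : Fin s → R) (k : Fin s) :
    (∑ j : Fin s, g j • ((U^2 : R) • y1 s j)) (Sum.inr (Sum.inr k)) = g k * U^2 := by
  rw [Finset.sum_apply]
  rw [Finset.sum_eq_single k]
  · simp [y1, Pi.single_apply]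
  · intro b _ hb
    simp [y1, Pi.single_apply, Ne.symm hb]
  · intro h; exact absurd (Finset.mem_univ _) h

lemma hmain (m : M s) (hm : d m = 0) :
    (U^2 : R) • ((m (Sum.inl 2)
          + U^2 * m (Sum.inr (Sum.inl ⟨s-1, Nat.sub_lt hs Nat.one_pos⟩))) •
        ((U ^ (2 * (s - 1))) • x0 s
          + (∑ j : Fin s,
              if (j : ℕ) + 1 < s then (U ^ (2 * (s - 2 - (j : ℕ)))) • x1 s j else 0)
          + y2 s) + m)
      = (U^2 * m (Sum.inr (Sum.inl ⟨s-1, Nat.sub_lt hs Nat.one_pos⟩))) • d (x2 s)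
        + ∑ j : Fin s, m (Sum.inr (Sum.inr j)) • ((U^2 : R) • y1 s j) := by
  have hE := hE1 s hs d hx0 hx1 hx1s hx2 hy2 hy1 m hm
  have hF3' := hF3 s hs d hx0 hx1 hx1s hx2 hy2 hy1 m hm
  funext i
  rw [hx2]
  rcases i with t | i
  · simp only [Pi.smul_apply, Pi.add_apply, smul_eq_mul]
    rw [hzsum_inl, hgsum_inl]
    fin_cases t <;>
        simp (config := { decide := true }) only [x0, x2, y2, x1, y1, Pi.single_apply,
          reduceCtorEq, Sum.inl.injEq, Sum.inr.injEq,
          show ∀ h : (0:ℕ) < 3, (⟨0, h⟩ : Fin 3) = 0 from fun _ => rfl,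
          show ∀ h : (1:ℕ) < 3, (⟨1, h⟩ : Fin 3) = 1 from fun _ => rfl,
          show ∀ h : (2:ℕ) < 3, (⟨2, h⟩ : Fin 3) = 2 from fun _ => rfl,
          if_false, if_true, mul_zero, mul_one, zero_add, add_zero, mul_add]
    · linear_combination (U^2 : R) * hF3'
        + (U^(2*(s-1)) * (m (Sum.inl 2)
            + U^2 * m (Sum.inr (Sum.inl ⟨s-1, Nat.sub_lt hs Nat.one_pos⟩))) * U^2) * h2R
    · rw [hE]; ring
    · linear_combination (U^2 * m (Sum.inl 2)) * h2R
  · rcases i with k | k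
    · simp only [Pi.smul_apply, Pi.add_apply, smul_eq_mul]
      rw [hzsum_a, hgsum_a]
      by_cases hk : (k : ℕ) + 1 < s
      · have hFk := hF s hs d hx0 hx1 hx1s hx2 hy2 hy1 m hm (s - 2 - (k:ℕ)) (k:ℕ) hk rfl
        rw [if_pos hk]
        have hne : ¬ (Sum.inr (Sum.inl k) : Fin 3 ⊕ Fin s ⊕ Fin s)
            = Sum.inr (Sum.inl ⟨s-1, Nat.sub_lt hs Nat.one_pos⟩) := by
          intro hc
          have hkk : k = (⟨s-1, Nat.sub_lt hs Nat.one_pos⟩ : Fin s) :=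
            Sum.inl.inj (Sum.inr.inj hc)
          have hv : (k:ℕ) = s - 1 := congrArg Fin.val hkk
          omega
        have hne2 : ¬ k = (⟨s-1, Nat.sub_lt hs Nat.one_pos⟩ : Fin s) := by
          intro hc
          have hv : (k:ℕ) = s - 1 := congrArg Fin.val hc
          omega
        simp only [x0, x2, y2, x1, y1, Pi.single_apply, reduceCtorEq, Sum.inl.injEq,
          Sum.inr.injEq, if_false, if_neg hne, if_neg hne2, mul_zero, mul_one, zero_add,
          add_zero]
        linear_combination (U^2 : R) * hFk
          + (U^2 * U^(2*(s-2-(k:ℕ))) * (m (Sum.inl 2)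
              + U^2 * m (Sum.inr (Sum.inl ⟨s-1, Nat.sub_lt hs Nat.one_pos⟩)))) * h2R
      · have hke : k = ⟨s-1, Nat.sub_lt hs Nat.one_pos⟩ :=
          Fin.ext (show (k:ℕ) = s - 1 from by have := k.isLt; omega)
        subst hke
        rw [if_neg hk]
        simp only [x0, x2, y2, x1, y1, Pi.single_apply, reduceCtorEq, Sum.inl.injEq,
          Sum.inr.injEq, if_false, if_pos rfl, if_true, mul_zero, mul_one, zero_add, add_zero]
        try ring
    · simp only [Pi.smul_apply, Pi.add_apply, smul_eq_mul]
      rw [hzsum_b, hgsum_b]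
      simp only [x0, x2, y2, x1, y1, Pi.single_apply, reduceCtorEq, Sum.inl.injEq,
        Sum.inr.injEq, if_false, mul_zero, mul_one, zero_add, add_zero]
      ring
omit hx0 hx1 hx1s hx2 hy2 hy1 in
lemma hzel0 :
    ((U ^ (2*(s-1))) • x0 s
      + (∑ j : Fin s, if (j:ℕ)+1 < s then (U ^ (2*(s-2-(j:ℕ)))) • x1 s j else 0)
      + y2 s) (Sum.inl 0) = U ^ (2*(s-1)) := by
  simp only [Pi.add_apply, Pi.smul_apply, smul_eq_mul]
  rw [hzsum_inl]
  simp [x0, y2, Pi.single_apply]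

omit hs hx0 hx1 hx1s hx2 hy2 hy1 in
lemma hnegM (a : M s) : -a = a := by
  funext i
  simp only [Pi.neg_apply]
  exact CharTwo.neg_eq _

end dev

set_option maxHeartbeats 4000000 in
set_option synthInstance.maxHeartbeats 1000000 in
/-- Fix `s ≥ 1`.  Let `M` be the free `R`-module on the generators
`x0, x1_1, …, x1_s, y1_1, …, y1_s, x2, y2`, and let `d : M → M` be the `R`-linear map with
`d x0 = U² • y1_1`; `d x1_j = U⁴ • y1_j + U² • y1_{j+1}` for `1 ≤ j ≤ s - 1`;
`d x1_s = U⁴ • y1_s`; `d x2 = x1_s + U² • y2`; `d y2 = U² • y1_s`; and `d y1_j = 0` for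
all `j`.  Then `d ∘ d = 0`, the element
`z = U^(2(s-1)) • x0 + ∑_{j=1}^{s-1} U^(2(s-1-j)) • x1_j + y2` is a cycle, and the
quotient of the homology `H = ker d / im d` by its `U`-torsion submodule is a free
`R`-module of rank one generated by the image of the class of `z`, i.e. the map
`r ↦ r • [[z]]` from `R` to that quotient is bijective. -/
theorem homology_mod_torsion_free_rank_one (s : ℕ) (hs : 1 ≤ s) (d : M s →ₗ[R] M s)
    (hx0 : d (x0 s) = (U ^ 2) • y1 s ⟨0, hs⟩)
    (hx1 : ∀ j : Fin s, ∀ h : (j : ℕ) + 1 < s,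
      d (x1 s j) = (U ^ 4) • y1 s j + (U ^ 2) • y1 s ⟨(j : ℕ) + 1, h⟩)
    (hx1s : d (x1 s ⟨s - 1, Nat.sub_lt hs Nat.one_pos⟩)
      = (U ^ 4) • y1 s ⟨s - 1, Nat.sub_lt hs Nat.one_pos⟩)
    (hx2 : d (x2 s) = x1 s ⟨s - 1, Nat.sub_lt hs Nat.one_pos⟩ + (U ^ 2) • y2 s)
    (hy2 : d (y2 s) = (U ^ 2) • y1 s ⟨s - 1, Nat.sub_lt hs Nat.one_pos⟩)
    (hy1 : ∀ j : Fin s, d (y1 s j) = 0) :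
    d ∘ₗ d = 0 ∧
    ∃ hz : (U ^ (2 * (s - 1))) • x0 s
        + (∑ j : Fin s,
            if (j : ℕ) + 1 < s then (U ^ (2 * (s - 2 - (j : ℕ)))) • x1 s j else 0)
        + y2 s ∈ LinearMap.ker d,
      Function.Bijective
        (LinearMap.toSpanSingleton R
          ((LinearMap.ker d ⧸ (LinearMap.range d).comap (LinearMap.ker d).subtype) ⧸
            Submodule.torsion' R
              (LinearMap.ker d ⧸ (LinearMap.range d).comap (LinearMap.ker d).subtype)
              (Submonoid.powers U))
          (Submodule.Quotient.mk (Submodule.Quotient.mk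
            ⟨(U ^ (2 * (s - 1))) • x0 s
              + (∑ j : Fin s,
                  if (j : ℕ) + 1 < s then (U ^ (2 * (s - 2 - (j : ℕ)))) • x1 s j else 0)
              + y2 s, hz⟩))) := by
  refine ⟨hdd s hs d hx0 hx1 hx1s hx2 hy2 hy1, hzker s hs d hx0 hx1 hx1s hx2 hy2 hy1,
    ?_, ?_⟩
  · -- injectivity
    intro a b hab
    simp only [LinearMap.toSpanSingleton_apply] at hab
    set zK : LinearMap.ker d := ⟨_, hzker s hs d hx0 hx1 hx1s hx2 hy2 hy1⟩ with hzK
    have h1 : (a - b) • (Submodule.Quotient.mk (Submodule.Quotient.mk zK) :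
        (LinearMap.ker d ⧸ (LinearMap.range d).comap (LinearMap.ker d).subtype) ⧸
          Submodule.torsion' R _ (Submonoid.powers U)) = 0 := by
      rw [sub_smul, hab, sub_self]
    rw [← Submodule.Quotient.mk_smul, Submodule.Quotient.mk_eq_zero,
      Submodule.mem_torsion'_iff] at h1
    obtain ⟨u, hu⟩ := h1
    rw [Submonoid.smul_def, smul_smul, ← Submodule.Quotient.mk_smul,
      Submodule.Quotient.mk_eq_zero, Submodule.mem_comap] at hu
    obtain ⟨n, hn⟩ := hu
    have h0 : d n (Sum.inl 0) = (((u : R) * (a - b)) • zK : LinearMap.ker d).1 (Sum.inl 0) := by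
      rw [hn]; rfl
    rw [hdinl0 s hs d hx0 hx1 hx1s hx2 hy2 hy1 n] at h0
    have h2 : (0 : R) = ((u : R) * (a - b)) * U ^ (2*(s-1)) := by
      rw [h0]
      show (((u : R) * (a - b)) • (zK : M s)) (Sum.inl 0) = _
      rw [Pi.smul_apply, smul_eq_mul]
      congr 1
      exact hzel0 s hs
    obtain ⟨nu, hnu⟩ := u.2
    have hune : (u : R) ≠ 0 := by rw [← hnu]; exact pow_ne_zero _ hUne
    by_contra hne
    exact (mul_ne_zero (mul_ne_zero hune (sub_ne_zero.mpr hne))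
      (pow_ne_zero (2*(s-1)) hUne)) h2.symm
  · -- surjectivity
    intro q
    obtain ⟨h, rfl⟩ := Submodule.Quotient.mk_surjective _ q
    obtain ⟨mK, rfl⟩ := Submodule.Quotient.mk_surjective _ h
    have hm : d mK.1 = 0 := LinearMap.mem_ker.mp mK.2
    refine ⟨mK.1 (Sum.inl 2)
      + U^2 * mK.1 (Sum.inr (Sum.inl ⟨s-1, Nat.sub_lt hs Nat.one_pos⟩)), ?_⟩
    rw [LinearMap.toSpanSingleton_apply]
    set r : R := mK.1 (Sum.inl 2)
      + U^2 * mK.1 (Sum.inr (Sum.inl ⟨s-1, Nat.sub_lt hs Nat.one_pos⟩)) with hr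
    set zK : LinearMap.ker d := ⟨_, hzker s hs d hx0 hx1 hx1s hx2 hy2 hy1⟩ with hzK
    rw [← sub_eq_zero, ← Submodule.Quotient.mk_smul, ← Submodule.Quotient.mk_sub,
      ← Submodule.Quotient.mk_smul, ← Submodule.Quotient.mk_sub,
      Submodule.Quotient.mk_eq_zero, Submodule.mem_torsion'_iff]
    refine ⟨⟨U^2, ⟨2, rfl⟩⟩, ?_⟩
    rw [Submonoid.smul_def, ← Submodule.Quotient.mk_smul, Submodule.Quotient.mk_eq_zero,
      Submodule.mem_comap]
    show ((U^2 : R) • (r • zK - mK) : LinearMap.ker d).1 ∈ LinearMap.range d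
    have hco : ((U^2 : R) • (r • zK - mK) : LinearMap.ker d).1
        = (U^2 : R) • (r • (zK : M s) + mK.1) := by
      push_cast
      rw [sub_eq_add_neg, hnegM s]
    rw [hco, hzK]
    rw [hmain s hs d hx0 hx1 hx1s hx2 hy2 hy1 mK.1 hm]
    refine Submodule.add_mem _ (Submodule.smul_mem _ _ ⟨x2 s, rfl⟩) ?_
    refine Submodule.sum_mem _ fun j _ => Submodule.smul_mem _ _ ?_
    exact hbmem s hs d hx0 hx1 hx1s hx2 hy2 hy1 (j : ℕ) j.2
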